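/- Let P ⊆ ℝ^d be finite, Y ⊆ ℝ^d a bounded convex set, and for φ : P → ℝ and p ∈ P define MA_Y[φ](p) := Leb(Lag_P^φ(p) ∩ Y), the Lebesgue measure of the Laguerre cell intersected with Y. Then for each fixed p, the map φ ↦ -log MA_Y[φ](p) is convex on the set of φ with MA_Y[φ](p) > 0; equivalently, for φ_t = (1-t)φ₀ + tφ₁, one has MA_Y[φ_t](p) ≥ MA_Y[φ₀](p)^{1-t} · MA_Y[φ₁](p)^t. -/

import Mathlib

/-!
The inequality is an instance of the multiplicative Brunn–Minkowski inequality
`vol((1 - t) A + t B) ≥ vol(A)^(1 - t) vol(B)^t`: a convex combination of a point of the cell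
`Lag_P^{φ₀}(p)` and a point of `Lag_P^{φ₁}(p)` lies in `Lag_P^{φ_t}(p)`, because every defining
inequality is affine in both `y` and `φ`, and `Y` is convex.

Brunn–Minkowski for null-measurable sets follows from the Prékopa–Leindler inequality applied
to indicator functions. In dimension one, Prékopa–Leindler follows for functions with supremum
`1` by integrating the one-dimensional Brunn–Minkowski inequality `|S| + |T| ≤ |S + T|` over
superlevel sets, and in general by rescaling and truncating. It then passes to products by
Fubini, hence to `ℝⁿ`.
-/

open scoped RealInnerProductSpace Pointwise
open MeasureTheory

/-- The Laguerre cell of a point `p` for the function `φ` on the finite set `P`. -/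
def Lag {d : ℕ} (P : Finset (EuclideanSpace ℝ (Fin d)))
    (φ : EuclideanSpace ℝ (Fin d) → ℝ) (p : EuclideanSpace ℝ (Fin d)) :
    Set (EuclideanSpace ℝ (Fin d)) :=
  {y | ∀ q ∈ P, φ p + ⟪q - p, y⟫ ≤ φ q}

open Set
open scoped ENNReal

theorem volume_add_volume_le_volume_add_of_isCompact {K L : Set ℝ} (hK : IsCompact K)
    (hL : IsCompact L) (hK₀ : K.Nonempty) (hL₀ : L.Nonempty) :
    volume K + volume L ≤ volume (K + L) := by
  set k := sSup K
  set l := sInf L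
  -- the translates `l +ᵥ K` and `k +ᵥ L` lie in `K + L` and meet only at `k + l`
  have h_left : l +ᵥ K ⊆ K + L := by
    rintro _ ⟨x, hx, rfl⟩
    exact ⟨x, hx, l, hL.sInf_mem hL₀, add_comm _ _⟩
  have h_right : k +ᵥ L ⊆ K + L := by
    rintro _ ⟨y, hy, rfl⟩
    exact ⟨k, hK.sSup_mem hK₀, y, hy, rfl⟩
  have h_inter : (l +ᵥ K) ∩ (k +ᵥ L) ⊆ {k + l} := by
    rintro _ ⟨⟨x, hx, rfl⟩, ⟨y, hy, hxy⟩⟩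
    have hxk : x ≤ k := le_csSup hK.bddAbove hx
    have hly : l ≤ y := csInf_le hL.bddBelow hy
    simp only [vadd_eq_add] at hxy ⊢
    exact mem_singleton_iff.mpr (by linarith)
  calc volume K + volume L = volume (l +ᵥ K) + volume (k +ᵥ L) := by
        rw [measure_vadd, measure_vadd]
    _ = volume ((l +ᵥ K) ∪ (k +ᵥ L)) + volume ((l +ᵥ K) ∩ (k +ᵥ L)) :=
        (measure_union_add_inter _ (hL.vadd k).measurableSet).symm
    _ ≤ volume (K + L) + 0 :=
        add_le_add (measure_mono (union_subset h_left h_right))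
          (measure_mono_null h_inter (measure_singleton _)).le
    _ = volume (K + L) := add_zero _

theorem volume_add_volume_le_volume_add {S T : Set ℝ} (hS : MeasurableSet S)
    (hT : MeasurableSet T) (hS₀ : S.Nonempty) (hT₀ : T.Nonempty) :
    volume S + volume T ≤ volume (S + T) := by
  obtain ⟨x, hx⟩ := hS₀
  obtain ⟨y, hy⟩ := hT₀
  rw [hS.measure_eq_iSup_isCompact, hT.measure_eq_iSup_isCompact]
  simp only [iSup_and']
  refine ENNReal.biSup_add_biSup_le' ⟨∅, empty_subset _, isCompact_empty⟩
    ⟨∅, empty_subset _, isCompact_empty⟩ fun K ⟨hKS, hK⟩ L ⟨hLT, hL⟩ => ?_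
  -- adding a point of `S` (resp. `T`) makes the compact sets nonempty
  calc volume K + volume L ≤ volume (insert x K) + volume (insert y L) :=
        add_le_add (measure_mono (subset_insert _ _)) (measure_mono (subset_insert _ _))
    _ ≤ volume (insert x K + insert y L) :=
        volume_add_volume_le_volume_add_of_isCompact (hK.insert x) (hL.insert y)
          (insert_nonempty _ _) (insert_nonempty _ _)
    _ ≤ volume (S + T) :=
        measure_mono (add_subset_add (insert_subset hx hKS) (insert_subset hy hLT))

theorem lintegral_eq_lintegral_meas_ofReal_lt {α : Type*} [MeasurableSpace α] (μ : Measure α)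
    {f : α → ℝ≥0∞} (hf : Measurable f) (hf_top : ∀ x, f x ≠ ∞) :
    ∫⁻ x, f x ∂μ = ∫⁻ s in Ioi 0, μ {x | ENNReal.ofReal s < f x} := by
  have h := lintegral_eq_lintegral_meas_lt μ (ae_of_all _ fun x => (f x).toReal_nonneg)
    hf.ennreal_toReal.aemeasurable
  simp only [ENNReal.ofReal_toReal (hf_top _)] at h
  rw [h]
  refine setLIntegral_congr_fun measurableSet_Ioi fun s hs => ?_
  simp only [ENNReal.ofReal_lt_iff_lt_toReal (le_of_lt hs) (hf_top _)]

theorem ENNReal.rpow_one_sub_mul_rpow_le_add {t : ℝ} (ht₀ : 0 < t) (ht₁ : t < 1) (a b : ℝ≥0∞) :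
    a ^ (1 - t) * b ^ t ≤ ENNReal.ofReal (1 - t) * a + ENNReal.ofReal t * b := by
  have hpq : (1 - t)⁻¹.HolderConjugate t⁻¹ :=
    (Real.holderConjugate_iff).mpr ⟨by rw [one_lt_inv₀ (by linarith)]; linarith, by simp⟩
  convert ENNReal.young_inequality (a ^ (1 - t)) (b ^ t) hpq using 2 <;>
  · rw [← ENNReal.rpow_mul, mul_inv_cancel₀ (by linarith), ENNReal.rpow_one, div_eq_mul_inv,
      ENNReal.ofReal_inv_of_pos (by linarith), inv_inv, mul_comm]

theorem ENNReal.min_le_rpow_one_sub_mul_rpow {t : ℝ} (ht₀ : 0 ≤ t) (ht₁ : t ≤ 1) (a b : ℝ≥0∞) :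
    min a b ≤ a ^ (1 - t) * b ^ t :=
  calc min a b = min a b ^ (1 - t) * min a b ^ t := by
        rw [← ENNReal.rpow_add_of_nonneg _ _ (sub_nonneg.mpr ht₁) ht₀, sub_add_cancel,
          ENNReal.rpow_one]
    _ ≤ a ^ (1 - t) * b ^ t :=
        mul_le_mul' (ENNReal.rpow_le_rpow (min_le_left _ _) (sub_nonneg.mpr ht₁))
          (ENNReal.rpow_le_rpow (min_le_right _ _) ht₀)

theorem lintegral_weighted_add_le_of_min_le {t : ℝ} (ht₀ : 0 ≤ t) (ht₁ : t ≤ 1)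
    {f g h : ℝ → ℝ≥0∞} (hf : Measurable f) (hg : Measurable g) (hh : Measurable h)
    (hf₁ : ⨆ x, f x = 1) (hg₁ : ⨆ x, g x = 1)
    (hfgh : ∀ x y, min (f x) (g y) ≤ h ((1 - t) * x + t * y)) :
    ENNReal.ofReal (1 - t) * (∫⁻ x, f x) + ENNReal.ofReal t * ∫⁻ x, g x ≤ ∫⁻ x, h x := by
  have hf_le : ∀ x, f x ≤ 1 := fun x => hf₁ ▸ le_iSup f x
  have hg_le : ∀ x, g x ≤ 1 := fun x => hg₁ ▸ le_iSup g x
  set level : (ℝ → ℝ≥0∞) → ℝ → Set ℝ := fun F s => {x | ENNReal.ofReal s < F x}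
  -- Brunn–Minkowski on each superlevel set; `h` is capped at `1` to keep its values finite
  have h_level : ∀ s ∈ Ioi (0 : ℝ), ENNReal.ofReal (1 - t) * volume (level f s) +
      ENNReal.ofReal t * volume (level g s) ≤ volume (level (fun z => min (h z) 1) s) := by
    intro s _
    rcases lt_or_ge s 1 with hs | hs
    · have hs' : ENNReal.ofReal s < 1 := ENNReal.ofReal_lt_one.mpr hs
      have hf₀ : (level f s).Nonempty := lt_iSup_iff.mp (hf₁ ▸ hs' : _ < ⨆ x, f x)
      have hg₀ : (level g s).Nonempty := lt_iSup_iff.mp (hg₁ ▸ hs' : _ < ⨆ x, g x)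
      have h_sub : (1 - t) • level f s + t • level g s ⊆ level (fun z => min (h z) 1) s := by
        rintro _ ⟨_, ⟨x, hx, rfl⟩, _, ⟨y, hy, rfl⟩, rfl⟩
        exact lt_min ((lt_min hx hy).trans_le (hfgh x y)) hs'
      calc ENNReal.ofReal (1 - t) * volume (level f s) + ENNReal.ofReal t * volume (level g s)
          = volume ((1 - t) • level f s) + volume (t • level g s) := by
            simp [Measure.addHaar_smul, abs_of_nonneg ht₀, abs_of_nonneg (sub_nonneg.mpr ht₁)]
        _ ≤ volume ((1 - t) • level f s + t • level g s) :=
            volume_add_volume_le_volume_add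
              ((hf measurableSet_Ioi).const_smul₀ _) ((hg measurableSet_Ioi).const_smul₀ _)
              (hf₀.smul_set) (hg₀.smul_set)
        _ ≤ _ := measure_mono h_sub
    · have h_empty : ∀ F : ℝ → ℝ≥0∞, (∀ x, F x ≤ 1) → level F s = ∅ := fun F hF =>
        eq_empty_of_forall_notMem fun x hx =>
          (hx.trans_le (hF x)).not_ge (ENNReal.one_le_ofReal.mpr hs)
      simp [h_empty f hf_le, h_empty g hg_le]
  have h_fin : ∀ F : ℝ → ℝ≥0∞, (∀ x, F x ≤ 1) → ∀ x, F x ≠ ∞ := fun F hF x =>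
    ne_top_of_le_ne_top ENNReal.one_ne_top (hF x)
  have h_anti : ∀ F : ℝ → ℝ≥0∞, Measurable fun s => volume (level F s) := fun F =>
    Antitone.measurable fun r r' hr => measure_mono fun x hx =>
      (ENNReal.ofReal_le_ofReal hr).trans_lt hx
  calc ENNReal.ofReal (1 - t) * (∫⁻ x, f x) + ENNReal.ofReal t * ∫⁻ x, g x
      = ∫⁻ s in Ioi 0, (ENNReal.ofReal (1 - t) * volume (level f s) +
          ENNReal.ofReal t * volume (level g s)) := by
        rw [lintegral_add_left ((h_anti f).const_mul _), lintegral_const_mul _ (h_anti f),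
          lintegral_const_mul _ (h_anti g),
          lintegral_eq_lintegral_meas_ofReal_lt volume hf (h_fin f hf_le),
          lintegral_eq_lintegral_meas_ofReal_lt volume hg (h_fin g hg_le)]
    _ ≤ ∫⁻ s in Ioi 0, volume (level (fun z => min (h z) 1) s) :=
        setLIntegral_mono (h_anti _) h_level
    _ = ∫⁻ x, min (h x) 1 :=
        (lintegral_eq_lintegral_meas_ofReal_lt _ (hh.min measurable_const)
          (h_fin _ fun _ => min_le_right _ _)).symm
    _ ≤ ∫⁻ x, h x := lintegral_mono fun _ => min_le_left _ _

theorem lintegral_rpow_mul_lintegral_rpow_le_of_iSup_ne_top {t : ℝ} (ht₀ : 0 < t) (ht₁ : t < 1)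
    {f g h : ℝ → ℝ≥0∞} (hf : Measurable f) (hg : Measurable g) (hh : Measurable h)
    (hf_top : ⨆ x, f x ≠ ∞) (hg_top : ⨆ x, g x ≠ ∞)
    (hfgh : ∀ x y, f x ^ (1 - t) * g y ^ t ≤ h ((1 - t) * x + t * y)) :
    (∫⁻ x, f x) ^ (1 - t) * (∫⁻ x, g x) ^ t ≤ ∫⁻ x, h x := by
  have ht₁' : 0 < 1 - t := sub_pos.mpr ht₁
  set a := ⨆ x, f x
  set b := ⨆ x, g x
  rcases eq_or_ne a 0 with ha₀ | ha₀
  · simp [funext (ENNReal.iSup_eq_zero.mp ha₀), ENNReal.zero_rpow_of_pos ht₁']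
  rcases eq_or_ne b 0 with hb₀ | hb₀
  · simp [funext (ENNReal.iSup_eq_zero.mp hb₀), ENNReal.zero_rpow_of_pos ht₀]
  set c := a ^ (1 - t) * b ^ t
  have hc₀ : c ≠ 0 := mul_ne_zero (ENNReal.rpow_pos (pos_iff_ne_zero.mpr ha₀) hf_top).ne'
    (ENNReal.rpow_pos (pos_iff_ne_zero.mpr hb₀) hg_top).ne'
  have hc_top : c ≠ ∞ := ENNReal.mul_ne_top (ENNReal.rpow_ne_top_of_nonneg ht₁'.le hf_top)
    (ENNReal.rpow_ne_top_of_nonneg ht₀.le hg_top)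
  have h_scale : ∀ u v : ℝ≥0∞,
      (a⁻¹ * u) ^ (1 - t) * (b⁻¹ * v) ^ t = c⁻¹ * (u ^ (1 - t) * v ^ t) := by
    intro u v
    rw [ENNReal.mul_rpow_of_nonneg _ _ ht₁'.le, ENNReal.mul_rpow_of_nonneg _ _ ht₀.le,
      ENNReal.inv_rpow, ENNReal.inv_rpow,
      ENNReal.mul_inv (Or.inr (ENNReal.rpow_ne_top_of_nonneg ht₀.le hg_top))
        (Or.inl (ENNReal.rpow_ne_top_of_nonneg ht₁'.le hf_top))]
    ring
  have h_norm := lintegral_weighted_add_le_of_min_le ht₀.le ht₁.le (hf.const_mul a⁻¹)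
    (hg.const_mul b⁻¹) (hh.const_mul c⁻¹)
    (by rw [← ENNReal.mul_iSup, ENNReal.inv_mul_cancel ha₀ hf_top])
    (by rw [← ENNReal.mul_iSup, ENNReal.inv_mul_cancel hb₀ hg_top]) fun x y =>
      (ENNReal.min_le_rpow_one_sub_mul_rpow ht₀.le ht₁.le _ _).trans
        ((h_scale _ _).trans_le (mul_le_mul_right (hfgh x y) _))
  rw [lintegral_const_mul _ hf, lintegral_const_mul _ hg, lintegral_const_mul _ hh] at h_norm
  calc (∫⁻ x, f x) ^ (1 - t) * (∫⁻ x, g x) ^ t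
      = c * ((a⁻¹ * ∫⁻ x, f x) ^ (1 - t) * (b⁻¹ * ∫⁻ x, g x) ^ t) := by
        rw [h_scale, ← mul_assoc, ENNReal.mul_inv_cancel hc₀ hc_top, one_mul]
    _ ≤ c * (c⁻¹ * ∫⁻ x, h x) :=
        mul_le_mul_right ((ENNReal.rpow_one_sub_mul_rpow_le_add ht₀ ht₁ _ _).trans h_norm) c
    _ = ∫⁻ x, h x := by rw [← mul_assoc, ENNReal.mul_inv_cancel hc₀ hc_top, one_mul]

def PrekopaLeindler (α : Type*) [MeasureSpace α] [AddCommMonoid α] [Module ℝ α] : Prop :=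
  ∀ ⦃t : ℝ⦄, 0 < t → t < 1 → ∀ ⦃f g h : α → ℝ≥0∞⦄, Measurable f → Measurable g → Measurable h →
    (∀ x y, f x ^ (1 - t) * g y ^ t ≤ h ((1 - t) • x + t • y)) →
    (∫⁻ x, f x) ^ (1 - t) * (∫⁻ x, g x) ^ t ≤ ∫⁻ x, h x

theorem lintegral_eq_iSup_lintegral_min_natCast {α : Type*} [MeasurableSpace α] (μ : Measure α)
    {f : α → ℝ≥0∞} (hf : Measurable f) :
    ∫⁻ x, f x ∂μ = ⨆ n : ℕ, ∫⁻ x, min (f x) n ∂μ := by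
  rw [← lintegral_iSup (fun n => hf.min measurable_const)
    fun m n hmn x => min_le_min le_rfl (Nat.cast_le.mpr hmn)]
  simp only [← inf_iSup_eq, ENNReal.iSup_natCast, inf_top_eq]

theorem prekopaLeindler_real : PrekopaLeindler ℝ := by
  intro t ht₀ ht₁ f g h hf hg hh hfgh
  have ht₁' : 0 < 1 - t := sub_pos.mpr ht₁
  have h_trunc : ∀ m n : ℕ,
      (∫⁻ x, min (f x) m) ^ (1 - t) * (∫⁻ x, min (g x) n) ^ t ≤ ∫⁻ x, h x := fun m n =>
    lintegral_rpow_mul_lintegral_rpow_le_of_iSup_ne_top ht₀ ht₁ (hf.min measurable_const)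
      (hg.min measurable_const) hh
      (ne_top_of_le_ne_top (ENNReal.natCast_ne_top m) (iSup_le fun _ => min_le_right _ _))
      (ne_top_of_le_ne_top (ENNReal.natCast_ne_top n) (iSup_le fun _ => min_le_right _ _))
      fun x y => (mul_le_mul' (ENNReal.rpow_le_rpow (min_le_left _ _) ht₁'.le)
        (ENNReal.rpow_le_rpow (min_le_left _ _) ht₀.le)).trans (hfgh x y)
  rw [lintegral_eq_iSup_lintegral_min_natCast _ hf, lintegral_eq_iSup_lintegral_min_natCast _ hg]
  have h_rpow := fun (s : ℝ) (hs : 0 < s) (u : ℕ → ℝ≥0∞) =>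
    (ENNReal.orderIsoRpow s hs).map_iSup u
  simp only [ENNReal.orderIsoRpow_apply] at h_rpow
  rw [h_rpow _ ht₁', h_rpow _ ht₀, ENNReal.iSup_mul]
  refine iSup_le fun m => ?_
  rw [ENNReal.mul_iSup]
  exact iSup_le (h_trunc m)

theorem PrekopaLeindler.prod {α β : Type*} [MeasureSpace α] [MeasureSpace β]
    [SFinite (volume : Measure β)] [AddCommMonoid α] [Module ℝ α] [AddCommMonoid β] [Module ℝ β]
    (hα : PrekopaLeindler α) (hβ : PrekopaLeindler β) : PrekopaLeindler (α × β) := by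
  intro t ht₀ ht₁ f g h hf hg hh hfgh
  have h_fubini : ∀ F : α × β → ℝ≥0∞, Measurable F →
      ∫⁻ z, F z = ∫⁻ x, ∫⁻ y, F (x, y) := fun F hF => by
    rw [Measure.volume_eq_prod, lintegral_prod _ hF.aemeasurable]
  rw [h_fubini f hf, h_fubini g hg, h_fubini h hh]
  refine hα ht₀ ht₁ hf.lintegral_prod_right' hg.lintegral_prod_right' hh.lintegral_prod_right'
    fun x₁ x₂ => hβ ht₀ ht₁ (hf.comp measurable_prodMk_left) (hg.comp measurable_prodMk_left)
      (hh.comp measurable_prodMk_left) fun y₁ y₂ => ?_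
  simpa only [Prod.smul_mk, Prod.mk_add_mk] using hfgh (x₁, y₁) (x₂, y₂)

theorem PrekopaLeindler.of_measurePreserving {α β : Type*} [MeasureSpace α] [MeasureSpace β]
    [AddCommMonoid α] [Module ℝ α] [AddCommMonoid β] [Module ℝ β] (e : α ≃ᵐ β)
    (he : MeasurePreserving e) (he_lin : IsLinearMap ℝ e) (hβ : PrekopaLeindler β) :
    PrekopaLeindler α := by
  intro t ht₀ ht₁ f g h hf hg hh hfgh
  have h_int : ∀ F : α → ℝ≥0∞, ∫⁻ y, F (e.symm y) = ∫⁻ x, F x := fun F =>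
    (he.symm e).lintegral_comp_emb e.symm.measurableEmbedding F
  rw [← h_int f, ← h_int g, ← h_int h]
  refine hβ ht₀ ht₁ (hf.comp e.symm.measurable) (hg.comp e.symm.measurable)
    (hh.comp e.symm.measurable) fun x y => ?_
  have h_symm : e.symm ((1 - t) • x + t • y) = (1 - t) • e.symm x + t • e.symm y := by
    rw [e.symm_apply_eq, he_lin.map_add, he_lin.map_smul, he_lin.map_smul, e.apply_symm_apply,
      e.apply_symm_apply]
  simpa only [Function.comp, h_symm] using hfgh (e.symm x) (e.symm y)

theorem prekopaLeindler_pi (n : ℕ) : PrekopaLeindler (Fin n → ℝ) := by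
  induction n with
  | zero =>
    intro t _ _ f g h _ _ _ hfgh
    have h_univ : (volume : Measure (Fin 0 → ℝ)) univ = 1 := by simp [volume_pi]
    rw [lintegral_unique, lintegral_unique, lintegral_unique, h_univ]
    simp only [mul_one]
    convert hfgh default default
  | succ n ih =>
    exact (prekopaLeindler_real.prod ih).of_measurePreserving
      (MeasurableEquiv.piFinSuccAbove (fun _ => ℝ) 0)
      (volume_preserving_piFinSuccAbove (fun _ => ℝ) 0) ⟨fun _ _ => rfl, fun _ _ => rfl⟩

theorem prekopaLeindler_euclideanSpace (d : ℕ) : PrekopaLeindler (EuclideanSpace ℝ (Fin d)) :=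
  (prekopaLeindler_pi d).of_measurePreserving (MeasurableEquiv.toLp 2 (Fin d → ℝ)).symm
    (EuclideanSpace.volume_preserving_symm_measurableEquiv_toLp (Fin d))
    ⟨fun _ _ => rfl, fun _ _ => rfl⟩

theorem PrekopaLeindler.volume_rpow_mul_volume_rpow_le {α : Type*} [MeasureSpace α]
    [AddCommMonoid α] [Module ℝ α] (hα : PrekopaLeindler α) {t : ℝ} (ht₀ : 0 < t) (ht₁ : t < 1)
    {A B C : Set α} (hA : NullMeasurableSet A) (hB : NullMeasurableSet B)
    (hABC : (1 - t) • A + t • B ⊆ C) :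
    volume A ^ (1 - t) * volume B ^ t ≤ volume C := by
  obtain ⟨A', hA'A, hA', hA'_ae⟩ := hA.exists_measurable_subset_ae_eq
  obtain ⟨B', hB'B, hB', hB'_ae⟩ := hB.exists_measurable_subset_ae_eq
  have hC' := measurableSet_toMeasurable volume C
  have h := hα ht₀ ht₁ (measurable_one.indicator hA') (measurable_one.indicator hB')
    (measurable_one.indicator hC') fun x y => ?_
  · rwa [lintegral_indicator_one hA', lintegral_indicator_one hB', lintegral_indicator_one hC',
      measure_congr hA'_ae, measure_congr hB'_ae, measure_toMeasurable] at h
  by_cases hx : x ∈ A'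
  · by_cases hy : y ∈ B'
    · have hz : (1 - t) • x + t • y ∈ toMeasurable volume C := subset_toMeasurable _ _
        (hABC (add_mem_add (smul_mem_smul_set (hA'A hx)) (smul_mem_smul_set (hB'B hy))))
      simp [indicator_of_mem hx, indicator_of_mem hy, indicator_of_mem hz]
    · simp [indicator_of_notMem hy, ENNReal.zero_rpow_of_pos ht₀]
  · simp [indicator_of_notMem hx, ENNReal.zero_rpow_of_pos (sub_pos.mpr ht₁)]

section Laguerre

variable {d : ℕ} (P : Finset (EuclideanSpace ℝ (Fin d))) (p : EuclideanSpace ℝ (Fin d))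

theorem smul_Lag_add_smul_Lag_subset (φ₀ φ₁ : EuclideanSpace ℝ (Fin d) → ℝ) {a b : ℝ}
    (ha : 0 ≤ a) (hb : 0 ≤ b) :
    a • Lag P φ₀ p + b • Lag P φ₁ p ⊆ Lag P (fun x => a * φ₀ x + b * φ₁ x) p := by
  rintro _ ⟨_, ⟨x, hx, rfl⟩, _, ⟨y, hy, rfl⟩, rfl⟩ q hq
  have hxq := mul_le_mul_of_nonneg_left (hx q hq) ha
  have hyq := mul_le_mul_of_nonneg_left (hy q hq) hb
  simp only [inner_add_right, real_inner_smul_right]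
  linarith

theorem convex_Lag (φ : EuclideanSpace ℝ (Fin d) → ℝ) : Convex ℝ (Lag P φ p) := by
  intro x hx y hy a b ha hb hab
  have h := smul_Lag_add_smul_Lag_subset P p φ φ ha hb
    (add_mem_add (smul_mem_smul_set hx) (smul_mem_smul_set hy))
  rwa [show (fun z => a * φ z + b * φ z) = φ from funext fun z => by
    rw [← add_mul, hab, one_mul]] at h

end Laguerre

theorem MA_log_concave_general {d : ℕ} (P : Finset (EuclideanSpace ℝ (Fin d)))
    (Y : Set (EuclideanSpace ℝ (Fin d))) (hYc : Convex ℝ Y)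
    (φ₀ φ₁ : EuclideanSpace ℝ (Fin d) → ℝ)
    {t : ℝ} (ht : t ∈ Set.Icc (0:ℝ) 1)
    {p : EuclideanSpace ℝ (Fin d)} :
    volume (Lag P φ₀ p ∩ Y) ^ (1 - t) * volume (Lag P φ₁ p ∩ Y) ^ t ≤
      volume (Lag P (fun x => (1 - t) * φ₀ x + t * φ₁ x) p ∩ Y) := by
  obtain ⟨ht₀, ht₁⟩ := ht
  rcases ht₀.eq_or_lt with rfl | ht₀
  · simp
  rcases ht₁.eq_or_lt with rfl | ht₁
  · simp
  have h_combo : (1 - t) • (Lag P φ₀ p ∩ Y) + t • (Lag P φ₁ p ∩ Y) ⊆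
      Lag P (fun x => (1 - t) * φ₀ x + t * φ₁ x) p ∩ Y :=
    subset_inter
      ((add_subset_add (smul_set_mono inter_subset_left) (smul_set_mono inter_subset_left)).trans
        (smul_Lag_add_smul_Lag_subset P p φ₀ φ₁ (sub_pos.mpr ht₁).le ht₀.le))
      ((add_subset_add (smul_set_mono inter_subset_right) (smul_set_mono inter_subset_right)).trans
        (hYc.set_combo_subset (sub_pos.mpr ht₁).le ht₀.le (sub_add_cancel 1 t)))
  exact (prekopaLeindler_euclideanSpace d).volume_rpow_mul_volume_rpow_le ht₀ ht₁
    (((convex_Lag P p φ₀).inter hYc).nullMeasurableSet _)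
    (((convex_Lag P p φ₁).inter hYc).nullMeasurableSet _) h_combo

/-- Log-concavity of the discrete Monge–Ampère operator `φ ↦ Leb(Lag_P^φ(p) ∩ Y)`:
equivalently, the multiplicative Brunn–Minkowski-type inequality along linear
interpolations of `φ`. -/
theorem MA_log_concave {d : ℕ} (P : Finset (EuclideanSpace ℝ (Fin d)))
    (Y : Set (EuclideanSpace ℝ (Fin d))) (hYb : Bornology.IsBounded Y) (hYc : Convex ℝ Y)
    (φ₀ φ₁ : EuclideanSpace ℝ (Fin d) → ℝ)
    {t : ℝ} (ht : t ∈ Set.Icc (0:ℝ) 1)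
    {p : EuclideanSpace ℝ (Fin d)} (hp : p ∈ P) :
    volume (Lag P φ₀ p ∩ Y) ^ (1 - t) * volume (Lag P φ₁ p ∩ Y) ^ t ≤
      volume (Lag P (fun x => (1 - t) * φ₀ x + t * φ₁ x) p ∩ Y) :=
  MA_log_concave_general P Y hYc φ₀ φ₁ ht
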